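/- arXiv:1805.00374 — 2 statements merged into one kernel-verified Lean document; each statement's English description precedes it below -/
import Mathlib

section
/- Let f : K → L be a morphism of bicomplexes and r ≥ 0. The following are equivalent: (1) ZW_k(f) is surjective for all 0 ≤ k ≤ r; (2) Z_k(f) is surjective for all 0 ≤ k ≤ r; (3) E_k(f) is surjective for all 0 ≤ k ≤ r. -/
open scoped Classical

/-- A bicomplex of `R`-modules, with commuting differentials `d0` of bidegree `(0,1)`
and `d1` of bidegree `(-1,0)`, encoded in "all indices" form: `d0 i j i' j'` is the
component `X i j → X i' j'`, which vanishes unless `(i',j') = (i, j+1)`, and similarly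
`d1` vanishes unless `(i',j') = (i-1, j)`. -/
structure Bicomplex (R : Type) [CommRing R] where
  X : ℤ → ℤ → Type
  [addgrp : ∀ i j, AddCommGroup (X i j)]
  [mod : ∀ i j, Module R (X i j)]
  d0 : ∀ i j i' j', X i j →ₗ[R] X i' j'
  d1 : ∀ i j i' j', X i j →ₗ[R] X i' j'
  d0_ne : ∀ i j i' j', ¬(i' = i ∧ j' = j + 1) → d0 i j i' j' = 0
  d1_ne : ∀ i j i' j', ¬(i' = i - 1 ∧ j' = j) → d1 i j i' j' = 0
  d0_sq : ∀ i j i'' j'' x, d0 i (j+1) i'' j'' (d0 i j i (j+1) x) = 0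
  d1_sq : ∀ i j i'' j'' x, d1 (i-1) j i'' j'' (d1 i j (i-1) j x) = 0
  comm : ∀ i j i'' j'' x,
    d0 (i-1) j i'' j'' (d1 i j (i-1) j x) = d1 i (j+1) i'' j'' (d0 i j i (j+1) x)

attribute [instance] Bicomplex.addgrp Bicomplex.mod

variable {R : Type} [CommRing R]

/-- Transport an element of `A.X i j` along equalities of the indices. -/
def Bicomplex.cst (A : Bicomplex R) {i j i' j' : ℤ} (h1 : i = i') (h2 : j = j')
    (x : A.X i j) : A.X i' j' := cast (by rw [h1, h2]) x

/-- Morphisms of bicomplexes. -/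
structure BicomplexHom (K L : Bicomplex R) where
  f : ∀ i j, K.X i j →ₗ[R] L.X i j
  comm0 : ∀ i j i' j' x, f i' j' (K.d0 i j i' j' x) = L.d0 i j i' j' (f i j x)
  comm1 : ∀ i j i' j' x, f i' j' (K.d1 i j i' j' x) = L.d1 i j i' j' (f i j x)

def BicomplexHom.comp {K L M : Bicomplex R} (g : BicomplexHom L M) (φ : BicomplexHom K L) :
    BicomplexHom K M where
  f := fun i j => (g.f i j).comp (φ.f i j)
  comm0 := by intro i j i' j' x; simp [LinearMap.comp_apply, φ.comm0, g.comm0]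
  comm1 := by intro i j i' j' x; simp [LinearMap.comp_apply, φ.comm1, g.comm1]

def BicomplexHom.id' (K : Bicomplex R) : BicomplexHom K K :=
  ⟨fun _ _ => LinearMap.id, fun _ _ _ _ _ => rfl, fun _ _ _ _ _ => rfl⟩

def BicomplexHom.zero (K L : Bicomplex R) : BicomplexHom K L :=
  ⟨fun _ _ => 0, by intro i j i' j' x; simp, by intro i j i' j' x; simp⟩

/-- Tuples `(a_0, …, a_{m-1})` with `a_k ∈ A^{P-k, Q-k}` (a staircase of entries). -/
def ZWTuple (A : Bicomplex R) (m : ℕ) (P Q : ℤ) :=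
  ∀ k : Fin m, A.X (P - (k.1:ℤ)) (Q - (k.1:ℤ))

/-- The witness chain conditions `d_1 a_k = d_0 a_{k+1}`. -/
def WChain (A : Bicomplex R) (m : ℕ) (P Q : ℤ) (b : ZWTuple A m P Q) : Prop :=
  ∀ (k : ℕ) (h : k + 1 < m),
    A.d1 (P - ((k:ℕ):ℤ)) (Q - ((k:ℕ):ℤ)) (P - ((k+1:ℕ):ℤ)) (Q - ((k:ℕ):ℤ))
        (b ⟨k, Nat.lt_of_succ_lt h⟩) =
      A.d0 (P - ((k+1:ℕ):ℤ)) (Q - ((k+1:ℕ):ℤ)) (P - ((k+1:ℕ):ℤ)) (Q - ((k:ℕ):ℤ))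
        (b ⟨k+1, h⟩)

/-- `b` is a witness `m`-cycle: `d_0 b_0 = 0` and `d_1 b_k = d_0 b_{k+1}`.
This is the set `ZW_m^{P,Q}(A)` (for `m ≥ 1`). -/
def IsZWT (A : Bicomplex R) (m : ℕ) (P Q : ℤ) (b : ZWTuple A m P Q) : Prop :=
  (∀ h : 0 < m,
    A.d0 (P - ((0:ℕ):ℤ)) (Q - ((0:ℕ):ℤ)) (P - ((0:ℕ):ℤ)) (Q - ((0:ℕ):ℤ) + 1) (b ⟨0, h⟩) = 0)
  ∧ WChain A m P Q b

/-- `(x, t)` is a witness `(m+1)`-cycle in head/tail form: `x ∈ A^{p,q}` with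
`d_0 x = 0`, and `t = (a_1, …, a_m)` a chain of witnesses with `d_1 x = d_0 a_1`. -/
def IsWit (A : Bicomplex R) (m : ℕ) (p q : ℤ) (x : A.X p q)
    (t : ZWTuple A m (p-1) (q-1)) : Prop :=
  A.d0 p q p (q+1) x = 0 ∧ WChain A m (p-1) (q-1) t ∧
  ∀ h : 0 < m,
    A.d1 p q (p - 1 - ((0:ℕ):ℤ)) (q - 1 - ((0:ℕ):ℤ) + 1) x =
      A.d0 (p - 1 - ((0:ℕ):ℤ)) (q - 1 - ((0:ℕ):ℤ)) (p - 1 - ((0:ℕ):ℤ))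
        (q - 1 - ((0:ℕ):ℤ) + 1) (t ⟨0, h⟩)

/-- `x ∈ Z_r^{p,q}(A)`: the `r`-cycles of the (column-filtration) spectral sequence of a
bicomplex, in the explicit form of Lemma `classical_ss`. -/
def IsZ (A : Bicomplex R) (r : ℕ) (p q : ℤ) (x : A.X p q) : Prop :=
  match r with
  | 0 => True
  | m+1 => ∃ t : ZWTuple A m (p-1) (q-1), IsWit A m p q x t

/-- `x ∈ B_r^{p,q}(A)`: the `r`-boundaries of the (column-filtration) spectral sequence
of a bicomplex, in the explicit form of Lemma `classical_ss`. -/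
def IsB (A : Bicomplex R) (r : ℕ) (p q : ℤ) (x : A.X p q) : Prop :=
  match r with
  | 0 => x = 0
  | 1 => ∃ y : A.X p (q-1), A.d0 p (q-1) p q y = x
  | m+2 => ∃ b : ZWTuple A (m+2) (p+(m:ℤ)+1) (q+(m:ℤ)),
      (A.d0 (p+(m:ℤ)+1 - ((0:ℕ):ℤ)) (q+(m:ℤ) - ((0:ℕ):ℤ)) (p+(m:ℤ)+1 - ((0:ℕ):ℤ))
          (q+(m:ℤ) - ((0:ℕ):ℤ) + 1) (b ⟨0, by omega⟩) = 0)
      ∧ (∀ (k : ℕ) (h : k + 1 ≤ m),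
          A.d1 (p+(m:ℤ)+1 - ((k:ℕ):ℤ)) (q+(m:ℤ) - ((k:ℕ):ℤ)) (p+(m:ℤ)+1 - ((k+1:ℕ):ℤ))
              (q+(m:ℤ) - ((k:ℕ):ℤ)) (b ⟨k, by omega⟩) =
            A.d0 (p+(m:ℤ)+1 - ((k+1:ℕ):ℤ)) (q+(m:ℤ) - ((k+1:ℕ):ℤ))
              (p+(m:ℤ)+1 - ((k+1:ℕ):ℤ)) (q+(m:ℤ) - ((k:ℕ):ℤ)) (b ⟨k+1, by omega⟩))
      ∧ x = A.d0 (p+(m:ℤ)+1 - ((m+1:ℕ):ℤ)) (q+(m:ℤ) - ((m+1:ℕ):ℤ)) p q (b ⟨m+1, by omega⟩)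
          + A.d1 (p+(m:ℤ)+1 - ((m:ℕ):ℤ)) (q+(m:ℤ) - ((m:ℕ):ℤ)) p q (b ⟨m, by omega⟩)

/-- `ZW_r(φ)` is bidegree-wise surjective (`ZW_0 = A`). -/
def ZWSurj {K L : Bicomplex R} (φ : BicomplexHom K L) (r : ℕ) : Prop :=
  match r with
  | 0 => ∀ p q, Function.Surjective (φ.f p q)
  | m+1 => ∀ (P Q : ℤ) (b : ZWTuple L (m+1) P Q), IsZWT L (m+1) P Q b →
      ∃ a : ZWTuple K (m+1) P Q, IsZWT K (m+1) P Q a ∧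
        ∀ k : Fin (m+1), φ.f (P - (k.1:ℤ)) (Q - (k.1:ℤ)) (a k) = b k

/-- `Z_r(φ)` is bidegree-wise surjective. -/
def ZSurj {K L : Bicomplex R} (φ : BicomplexHom K L) (r : ℕ) : Prop :=
  ∀ p q y, IsZ L r p q y → ∃ x, IsZ K r p q x ∧ φ.f p q x = y

/-- `E_r(φ)` is bidegree-wise surjective (elementwise formulation). -/
def ESurj {K L : Bicomplex R} (φ : BicomplexHom K L) (r : ℕ) : Prop :=
  ∀ p q y, IsZ L r p q y → ∃ x, IsZ K r p q x ∧ IsB L r p q (φ.f p q x - y)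

/-- `E_r(φ)` is bidegree-wise injective (elementwise formulation). -/
def EInj {K L : Bicomplex R} (φ : BicomplexHom K L) (r : ℕ) : Prop :=
  ∀ p q x, IsZ K r p q x → IsB L r p q (φ.f p q x) → IsB K r p q x

/-- `φ` is an `E_r`-quasi-isomorphism: `E_{r+1}(φ)` is an isomorphism. -/
def IsErQis {K L : Bicomplex R} (φ : BicomplexHom K L) (r : ℕ) : Prop :=
  ESurj φ (r+1) ∧ EInj φ (r+1)

/-!
`Z_r` is the projection of `ZW_r` to the head entry, so `ZW`-surjectivity gives
`Z`-surjectivity, and `Z`-surjectivity gives `E`-surjectivity because `0 ∈ B_r`.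

`Z ⇒ ZW`: lift the head of `b ∈ ZW_{m+1}(L)` to a cycle `x` with witnesses `s`; the defect
`tail b - φ s` lies in `ZW_m(L)`, and adding a lift of it to `s` lifts `b`.

`E ⇒ Z`, by strong induction: if `φ x - y = d_0 b_{m+1} + d_1 b_m ∈ B_{m+2}`, lift `b_{m+1}` to
`c` and the `ZW_{m+1}`-tuple `(b_0, …, b_m)` to `a`; then `u = d_0 c + d_1 a_m` is a cycle
with `φ u = φ x - y`, so `x - u` lifts `y`. (`B_1` is handled in the same way.)
-/

namespace Bicomplex

variable (A : Bicomplex R)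

@[simp]
theorem cst_cst {i j i' j' i'' j'' : ℤ} (h1 : i = i') (h2 : j = j') (h1' : i' = i'')
    (h2' : j' = j'') (x : A.X i j) :
    A.cst h1' h2' (A.cst h1 h2 x) = A.cst (h1.trans h1') (h2.trans h2') x := by
  subst h1 h2 h1' h2'; rfl

@[simp]
theorem d0_cst {i j i' j' a b : ℤ} (h1 : i = i') (h2 : j = j') (x : A.X i j) :
    A.d0 i' j' a b (A.cst h1 h2 x) = A.d0 i j a b x := by
  subst h1 h2; rfl

@[simp]
theorem d1_cst {i j i' j' a b : ℤ} (h1 : i = i') (h2 : j = j') (x : A.X i j) :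
    A.d1 i' j' a b (A.cst h1 h2 x) = A.d1 i j a b x := by
  subst h1 h2; rfl

theorem d0_eq_zero_congr {i j a b a' b' : ℤ} (h1 : a = a') (h2 : b = b') (x : A.X i j) :
    A.d0 i j a b x = 0 ↔ A.d0 i j a' b' x = 0 := by
  subst h1 h2; rfl

theorem d1_eq_d0_congr {i j i' j' a b a' b' : ℤ} (h1 : a = a') (h2 : b = b') (x : A.X i j)
    (y : A.X i' j') :
    A.d1 i j a b x = A.d0 i' j' a b y ↔ A.d1 i j a' b' x = A.d0 i' j' a' b' y := by
  subst h1 h2; rfl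

theorem d0_d0_eq_zero {i j a b i'' j'' : ℤ} (h1 : a = i) (h2 : b = j + 1) (x : A.X i j) :
    A.d0 a b i'' j'' (A.d0 i j a b x) = 0 := by
  subst h1 h2; exact A.d0_sq ..

theorem d1_d1_eq_zero {i j a b i'' j'' : ℤ} (h1 : a = i - 1) (h2 : b = j) (x : A.X i j) :
    A.d1 a b i'' j'' (A.d1 i j a b x) = 0 := by
  subst h1 h2; exact A.d1_sq ..

theorem d0_d1_eq_d1_d0 {i j a b c d i'' j'' : ℤ} (h1 : a = i - 1) (h2 : b = j) (h3 : c = i)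
    (h4 : d = j + 1) (x : A.X i j) :
    A.d0 a b i'' j'' (A.d1 i j a b x) = A.d1 c d i'' j'' (A.d0 i j c d x) := by
  subst h1 h2 h3 h4; exact A.comm ..

end Bicomplex

theorem BicomplexHom.f_cst {K L : Bicomplex R} (φ : BicomplexHom K L) {i j i' j' : ℤ}
    (h1 : i = i') (h2 : j = j') (x : K.X i j) :
    φ.f i' j' (K.cst h1 h2 x) = L.cst h1 h2 (φ.f i j x) := by
  subst h1 h2; rfl

namespace ZWTuple

variable {A : Bicomplex R} {m : ℕ} {P Q : ℤ}

instance : AddCommGroup (ZWTuple A m P Q) :=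
  inferInstanceAs (AddCommGroup (∀ k : Fin m, A.X (P - (k.1:ℤ)) (Q - (k.1:ℤ))))

@[simp] theorem zero_apply (k : Fin m) : (0 : ZWTuple A m P Q) k = 0 := rfl

@[simp] theorem add_apply (a b : ZWTuple A m P Q) (k : Fin m) : (a + b) k = a k + b k := rfl

@[simp] theorem sub_apply (a b : ZWTuple A m P Q) (k : Fin m) : (a - b) k = a k - b k := rfl

def head (b : ZWTuple A (m+1) P Q) : A.X P Q :=
  A.cst (by simp) (by simp) (b ⟨0, Nat.succ_pos m⟩)

def tail (b : ZWTuple A (m+1) P Q) : ZWTuple A m (P-1) (Q-1) :=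
  fun k => A.cst (by push_cast; ring) (by push_cast; ring) (b ⟨k.1+1, by omega⟩)

def cons (x : A.X P Q) (t : ZWTuple A m (P-1) (Q-1)) : ZWTuple A (m+1) P Q
  | ⟨0, _⟩ => A.cst (by simp) (by simp) x
  | ⟨n+1, _⟩ => A.cst (by push_cast; ring) (by push_cast; ring) (t ⟨n, by omega⟩)

@[simp]
theorem head_cons (x : A.X P Q) (t : ZWTuple A m (P-1) (Q-1)) : (cons x t).head = x := by
  simp only [head, cons, Bicomplex.cst_cst]; rfl

@[simp]
theorem cons_head_tail (b : ZWTuple A (m+1) P Q) : cons b.head b.tail = b := by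
  funext ⟨k, hk⟩
  cases k <;> simp only [head, tail, cons, Bicomplex.cst_cst] <;> rfl

def map {K L : Bicomplex R} (φ : BicomplexHom K L) (a : ZWTuple K m P Q) : ZWTuple L m P Q :=
  fun k => φ.f _ _ (a k)

variable {K L : Bicomplex R} (φ : BicomplexHom K L)

theorem map_eq_iff {a : ZWTuple K m P Q} {b : ZWTuple L m P Q} :
    a.map φ = b ↔ ∀ k : Fin m, φ.f _ _ (a k) = b k :=
  funext_iff

@[simp]
theorem map_add (a b : ZWTuple K m P Q) : (a + b).map φ = a.map φ + b.map φ :=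
  funext fun _ => _root_.map_add _ _ _

theorem head_map (a : ZWTuple K (m+1) P Q) : φ.f P Q a.head = (a.map φ).head :=
  φ.f_cst _ _ _

theorem map_cons (x : K.X P Q) (t : ZWTuple K m (P-1) (Q-1)) :
    (cons x t).map φ = cons (φ.f P Q x) (t.map φ) := by
  funext ⟨k, hk⟩
  cases k <;> apply φ.f_cst <;> simp <;> omega

end ZWTuple

section Witnesses

variable {A : Bicomplex R} {m : ℕ} {p q : ℤ} {x : A.X p q} {t : ZWTuple A m (p-1) (q-1)}

open Bicomplex

theorem wChain_cons_iff :
    WChain A (m+1) p q (ZWTuple.cons x t) ↔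
      (∀ h : 0 < m, A.d1 p q (p - 1 - ((0:ℕ):ℤ)) (q - 1 - ((0:ℕ):ℤ) + 1) x =
        A.d0 (p - 1 - ((0:ℕ):ℤ)) (q - 1 - ((0:ℕ):ℤ)) (p - 1 - ((0:ℕ):ℤ))
          (q - 1 - ((0:ℕ):ℤ) + 1) (t ⟨0, h⟩)) ∧ WChain A m (p-1) (q-1) t := by
  constructor
  · intro h
    refine ⟨fun hm => ?_, fun k hk => ?_⟩
    · have := h 0 (by omega)
      simp only [ZWTuple.cons, d0_cst, d1_cst] at this
      exact (d1_eq_d0_congr _ (by simp) (by simp) _ _).1 this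
    · have := h (k+1) (by omega)
      simp only [ZWTuple.cons, d0_cst, d1_cst] at this
      exact (d1_eq_d0_congr _ (by push_cast; ring) (by push_cast; ring) _ _).1 this
  · rintro ⟨h0, h⟩ k hk
    cases k with
    | zero =>
      simp only [ZWTuple.cons, d0_cst, d1_cst]
      exact (d1_eq_d0_congr _ (by simp) (by simp) _ _).2 (h0 (by omega))
    | succ k =>
      simp only [ZWTuple.cons, d0_cst, d1_cst]
      exact (d1_eq_d0_congr _ (by push_cast; ring) (by push_cast; ring) _ _).2 (h k (by omega))

theorem isZWT_cons_iff : IsZWT A (m+1) p q (ZWTuple.cons x t) ↔ IsWit A m p q x t := by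
  rw [IsZWT, wChain_cons_iff, IsWit]
  simp only [ZWTuple.cons, d0_cst, Nat.succ_pos, forall_const]
  rw [d0_eq_zero_congr A (show p - ((0:ℕ):ℤ) = p by simp)
    (show q - ((0:ℕ):ℤ) + 1 = q + 1 by simp)]
  tauto

end Witnesses

namespace IsWit

variable {A : Bicomplex R} {m : ℕ} {p q : ℤ} {x y : A.X p q} {s t : ZWTuple A m (p-1) (q-1)}

theorem add (hx : IsWit A m p q x s) (hy : IsWit A m p q y t) : IsWit A m p q (x + y) (s + t) := by
  refine ⟨?_, fun k hk => ?_, fun hm => ?_⟩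
  · rw [map_add, hx.1, hy.1, add_zero]
  · simp only [ZWTuple.add_apply, map_add, hx.2.1 k hk, hy.2.1 k hk]
  · simp only [ZWTuple.add_apply, map_add, hx.2.2 hm, hy.2.2 hm]

theorem sub (hx : IsWit A m p q x s) (hy : IsWit A m p q y t) : IsWit A m p q (x - y) (s - t) := by
  refine ⟨?_, fun k hk => ?_, fun hm => ?_⟩
  · rw [map_sub, hx.1, hy.1, sub_zero]
  · simp only [ZWTuple.sub_apply, map_sub, hx.2.1 k hk, hy.2.1 k hk]
  · simp only [ZWTuple.sub_apply, map_sub, hx.2.2 hm, hy.2.2 hm]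

theorem map {K L : Bicomplex R} (φ : BicomplexHom K L) {x : K.X p q}
    {s : ZWTuple K m (p-1) (q-1)} (h : IsWit K m p q x s) :
    IsWit L m p q (φ.f p q x) (s.map φ) := by
  refine ⟨?_, fun k hk => ?_, fun hm => ?_⟩
  · rw [← φ.comm0, h.1, map_zero]
  · simp only [ZWTuple.map, ← φ.comm0, ← φ.comm1, h.2.1 k hk]
  · simp only [ZWTuple.map, ← φ.comm0, ← φ.comm1, h.2.2 hm]

end IsWit

theorem isWit_zero_iff {A : Bicomplex R} {m : ℕ} {p q : ℤ} {t : ZWTuple A m (p-1) (q-1)} :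
    IsWit A m p q 0 t ↔ IsZWT A m (p-1) (q-1) t := by
  simp only [IsWit, IsZWT, map_zero, true_and, eq_comm (a := (0 : A.X _ _))]
  exact and_comm

theorem IsZ.sub {A : Bicomplex R} {r : ℕ} {p q : ℤ} {x y : A.X p q} (hx : IsZ A r p q x)
    (hy : IsZ A r p q y) : IsZ A r p q (x - y) := by
  match r, hx, hy with
  | 0, _, _ => trivial
  | _ + 1, ⟨s, hs⟩, ⟨t, ht⟩ => exact ⟨s - t, hs.sub ht⟩

theorem IsZ.add {A : Bicomplex R} {r : ℕ} {p q : ℤ} {x y : A.X p q} (hx : IsZ A r p q x)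
    (hy : IsZ A r p q y) : IsZ A r p q (x + y) := by
  match r, hx, hy with
  | 0, _, _ => trivial
  | _ + 1, ⟨s, hs⟩, ⟨t, ht⟩ => exact ⟨s + t, hs.add ht⟩

theorem isB_zero (A : Bicomplex R) (r : ℕ) (p q : ℤ) : IsB A r p q 0 := by
  match r with
  | 0 => rfl
  | 1 => exact ⟨0, map_zero _⟩
  | m + 2 => exact ⟨0, map_zero _, fun _ _ => by simp, by simp⟩

section Lifting

variable {K L : Bicomplex R} (φ : BicomplexHom K L)

/-- `ZWSurj φ m` for `m ≥ 1`; at `m = 0` this is about empty tuples, whereas `ZWSurj φ 0`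
means `ZW_0 = A`. -/
def LiftsZW (m : ℕ) : Prop :=
  ∀ (P Q : ℤ) (b : ZWTuple L m P Q), IsZWT L m P Q b →
    ∃ a : ZWTuple K m P Q, IsZWT K m P Q a ∧ a.map φ = b

theorem zwSurj_succ_iff {m : ℕ} : ZWSurj φ (m+1) ↔ LiftsZW φ (m+1) := by
  simp only [ZWSurj, LiftsZW, ZWTuple.map_eq_iff]

theorem liftsZW_zero : LiftsZW φ 0 :=
  fun _ _ _ _ => ⟨0, ⟨fun h => absurd h (lt_irrefl 0), fun _ h => absurd h (by omega)⟩,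
    funext fun k => k.elim0⟩

theorem zSurj_zero_iff : ZSurj φ 0 ↔ ∀ p q, Function.Surjective (φ.f p q) := by
  simp [ZSurj, IsZ, Function.Surjective]

variable {φ}

theorem LiftsZW.zSurj {m : ℕ} (h : LiftsZW φ (m+1)) : ZSurj φ (m+1) := by
  rintro p q y ⟨t, ht⟩
  obtain ⟨a, ha, hab⟩ := h p q _ (isZWT_cons_iff.2 ht)
  rw [← ZWTuple.cons_head_tail a, isZWT_cons_iff] at ha
  exact ⟨a.head, ⟨a.tail, ha⟩, by rw [ZWTuple.head_map, hab, ZWTuple.head_cons]⟩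

theorem LiftsZW.succ {m : ℕ} (hZW : LiftsZW φ m) (hZ : ZSurj φ (m+1)) : LiftsZW φ (m+1) := by
  intro P Q b hb
  rw [← ZWTuple.cons_head_tail b, isZWT_cons_iff] at hb
  obtain ⟨x, ⟨s, hs⟩, hx⟩ := hZ P Q b.head ⟨b.tail, hb⟩
  have hdefect : IsZWT L m (P-1) (Q-1) (b.tail - s.map φ) := by
    rw [← isWit_zero_iff, ← sub_self b.head]
    nth_rw 2 [← hx]
    exact hb.sub (hs.map φ)
  obtain ⟨e, he, hef⟩ := hZW _ _ _ hdefect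
  refine ⟨ZWTuple.cons x (s + e),
    isZWT_cons_iff.2 (add_zero x ▸ hs.add (isWit_zero_iff.2 he)), ?_⟩
  rw [ZWTuple.map_cons, ZWTuple.map_add, hef, hx, add_sub_cancel, ZWTuple.cons_head_tail]

theorem liftsZW_of_zSurj {m : ℕ} (h : ∀ j ≤ m, ZSurj φ j) : LiftsZW φ m := by
  induction m with
  | zero => exact liftsZW_zero φ
  | succ m ih => exact (ih fun j hj => h j (by omega)).succ (h (m+1) le_rfl)

theorem zSurj_of_zwSurj {k : ℕ} (h : ZWSurj φ k) : ZSurj φ k := by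
  match k with
  | 0 => exact (zSurj_zero_iff φ).2 h
  | _ + 1 => exact ((zwSurj_succ_iff φ).1 h).zSurj

theorem zwSurj_of_zSurj {k : ℕ} (h : ∀ j ≤ k, ZSurj φ j) : ZWSurj φ k := by
  match k with
  | 0 => exact (zSurj_zero_iff φ).1 (h 0 le_rfl)
  | _ + 1 => exact (zwSurj_succ_iff φ).2 (liftsZW_of_zSurj h)

end Lifting

section Cycles

variable {A : Bicomplex R}

open Bicomplex

theorem isZ_d0 (r : ℕ) {i j p q : ℤ} (hi : i = p) (hj : j + 1 = q) (c : A.X i j) :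
    IsZ A r p q (A.d0 i j p q c) := by
  match r with
  | 0 => trivial
  | m + 1 =>
    refine ⟨fun | ⟨0, _⟩ => A.d1 i j _ _ c | ⟨_ + 1, _⟩ => 0,
      ?_, fun k hk => ?_, fun _ => ?_⟩
    · exact A.d0_d0_eq_zero hi.symm hj.symm c
    · cases k with
      | zero => exact (A.d1_d1_eq_zero (by omega) (by omega) c).trans (map_zero _).symm
      | succ k => exact (map_zero _).trans (map_zero _).symm
    · exact (A.d0_d1_eq_d1_d0 (by omega) (by omega) hi.symm hj.symm c).symm

namespace IsZWT

variable {m : ℕ} {P Q : ℤ} {a : ZWTuple A (m+1) P Q}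

theorem d1_d0_last (ha : IsZWT A (m+1) P Q a) (i'' j'' : ℤ) :
    A.d1 (P - m) (Q - m + 1) i'' j''
      (A.d0 (P - m) (Q - m) (P - m) (Q - m + 1) (a ⟨m, m.lt_succ_self⟩)) = 0 := by
  match m, a, ha with
  | 0, a, ha => rw [ha.1 (by omega), map_zero]
  | n + 1, a, ha =>
    rw [← (A.d1_eq_d0_congr (by push_cast; ring) (by push_cast; ring) _ _).1 (ha.2 n (by omega))]
    apply A.d1_d1_eq_zero <;> push_cast <;> ring

/-- `d_1 a_m` is closed for both differentials: `d_0 d_1 a_m = d_1 d_0 a_m = d_1 d_1 a_{m-1}`. -/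
theorem isZ_d1_last (ha : IsZWT A (m+1) P Q a) (r : ℕ) {p q : ℤ} (hp : p = P - m - 1)
    (hq : q = Q - m) : IsZ A r p q (A.d1 (P - m) (Q - m) p q (a ⟨m, m.lt_succ_self⟩)) := by
  match r with
  | 0 => trivial
  | n + 1 =>
    refine ⟨0, ?_, fun k hk => ?_, fun _ => ?_⟩
    · rw [A.d0_d1_eq_d1_d0 hp hq rfl rfl]
      exact ha.d1_d0_last _ _
    · simp only [ZWTuple.zero_apply, map_zero]
    · rw [ZWTuple.zero_apply, map_zero]
      exact A.d1_d1_eq_zero hp hq _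

end IsZWT

end Cycles

section Boundaries

variable {K L : Bicomplex R} {φ : BicomplexHom K L}

theorem exists_isZ_map_eq_of_isB_add_two (hφ : ∀ p q, Function.Surjective (φ.f p q)) {m : ℕ}
    (hZW : LiftsZW φ (m+1)) {p q : ℤ} {z : L.X p q} (hz : IsB L (m+2) p q z) :
    ∃ u, IsZ K (m+2) p q u ∧ φ.f p q u = z := by
  obtain ⟨b, hb0, hbch, rfl⟩ := hz
  obtain ⟨a, ha, hab⟩ := hZW _ _ (fun k => b ⟨k.1, by omega⟩)
    ⟨fun _ => hb0, fun k hk => hbch k (by omega)⟩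
  obtain ⟨c, hc⟩ := hφ _ _ (b ⟨m+1, by omega⟩)
  refine ⟨K.d0 _ _ p q c + K.d1 _ _ p q (a ⟨m, m.lt_succ_self⟩),
    (isZ_d0 _ (by push_cast; ring) (by push_cast; ring) c).add
      (ha.isZ_d1_last _ (by ring) (by ring)), ?_⟩
  rw [map_add, φ.comm0, φ.comm1, hc, (ZWTuple.map_eq_iff φ).1 hab]

theorem exists_isZ_map_eq_of_isB {k : ℕ} (hZ : ∀ j < k, ZSurj φ j) {p q : ℤ} {z : L.X p q}
    (hz : IsB L k p q z) : ∃ u, IsZ K k p q u ∧ φ.f p q u = z := by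
  match k, hz with
  | 0, hz => exact ⟨0, trivial, by rw [map_zero]; exact hz.symm⟩
  | 1, ⟨y, hy⟩ =>
    obtain ⟨c, rfl⟩ := (zSurj_zero_iff φ).1 (hZ 0 one_pos) p (q-1) y
    exact ⟨K.d0 p (q-1) p q c, isZ_d0 1 rfl (by ring) c, by rw [φ.comm0, hy]⟩
  | m + 2, hz =>
    exact exists_isZ_map_eq_of_isB_add_two ((zSurj_zero_iff φ).1 (hZ 0 (by omega)))
      (liftsZW_of_zSurj fun j hj => hZ j (by omega)) hz

theorem ZSurj.eSurj {k : ℕ} (h : ZSurj φ k) : ESurj φ k := by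
  intro p q y hy
  obtain ⟨x, hx, rfl⟩ := h p q y hy
  exact ⟨x, hx, by rw [sub_self]; exact isB_zero L k p q⟩

theorem zSurj_of_eSurj {k : ℕ} (h : ∀ j ≤ k, ESurj φ j) : ZSurj φ k := by
  induction k using Nat.strong_induction_on with
  | _ k ih =>
    intro p q y hy
    obtain ⟨x, hx, hxy⟩ := h k le_rfl p q y hy
    obtain ⟨u, hu, hux⟩ :=
      exists_isZ_map_eq_of_isB (fun j hj => ih j hj fun i hi => h i (by omega)) hxy
    exact ⟨x - u, hx.sub hu, by rw [map_sub, hux, sub_sub_cancel]⟩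

end Boundaries

/-- For a morphism of bicomplexes, the following are equivalent: `ZW_k(f)` surjective for
all `k ≤ r`; `Z_k(f)` surjective for all `k ≤ r`; `E_k(f)` surjective for all `k ≤ r`. -/
theorem stmt12 {R : Type} [CommRing R] {K L : Bicomplex R} (φ : BicomplexHom K L) (r : ℕ) :
    ((∀ k ≤ r, ZWSurj φ k) ↔ (∀ k ≤ r, ZSurj φ k)) ∧
    ((∀ k ≤ r, ZSurj φ k) ↔ (∀ k ≤ r, ESurj φ k)) :=
  ⟨⟨fun h k hk => zSurj_of_zwSurj (h k hk),
      fun h _ hk => zwSurj_of_zSurj fun j hj => h j (hj.trans hk)⟩,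
    ⟨fun h k hk => (h k hk).eSurj,
      fun h _ hk => zSurj_of_eSurj fun j hj => h j (hj.trans hk)⟩⟩
end

section
/- Let f, g : A → B be morphisms of bicomplexes. If f and g are r-homotopic, then the induced maps E_{r+1}(f) and E_{r+1}(g) on the (r+1)-page of the column-filtration spectral sequences coincide. Equivalently (for r ≥ 1): if there are bigraded module maps h_i : A → B of bidegree (i, i−1), 1 ≤ i ≤ r, satisfying d_1h_{i+1} + (−1)^i h_{i+1}d_1 = d_0h_i + (−1)^i h_id_0 for 1 ≤ i ≤ r−1, (−1)^r d_0h_r + h_rd_0 = 0, and d_1h_1 + h_1d_1 = g − f, then E_{r+1}(f) = E_{r+1}(g). -/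
/-
Let `x` be an `(r+1)`-cycle with witnesses `t₀, …, t_{r-1}`: `d₀x = 0`, `d₁x = d₀t₀` and
`d₁tₗ = d₀tₗ₊₁`. Put `z(n, k) = hₙx - Σ_{l<k} (-1)ˡ h_{n+1+l} tₗ`. Applying the homotopy
relations to `x` and to every `tₗ`, the sum `Σ (-1)ˡ d₁h_{n+1+l}tₗ` telescopes, and the relation
`(-1)ʳ d₀hᵣ + hᵣd₀ = 0` turns its last term into a `d₀`-term; hence `d₁ z(i+1, k) = d₀ z(i, k+1)`
whenever `i + k = r - 1` and `i ≥ 1`. At `i = 0` the relation `d₁h₁ + h₁d₁ = g - f` leaves the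
defect `(g - f)x`, so the signed zigzag `±z(r - k, k)`, `0 ≤ k ≤ r`, exhibits `f x - g x` as an
`(r+1)`-boundary.
-/

open scoped Classical

variable {R : Type} [CommRing R]

/-- A family of candidate homotopy operators: for each `i : ℕ`, a map of bidegree
`(i, i-1)` from `K` to `L`, encoded in "all indices" form. -/
def HFam (K L : Bicomplex R) :=
  ∀ (_ : ℕ) (i j i' j' : ℤ), K.X i j →ₗ[R] L.X i' j'

/-- `h` is an `r`-homotopy from `f` to `g` (in the unpacked form of Proposition 4.17
of the paper): for `r ≥ 1`, maps `h_i` of bidegree `(i,i-1)`, `1 ≤ i ≤ r`, with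
`d_1 h_{i+1} + (-1)^i h_{i+1} d_1 = d_0 h_i + (-1)^i h_i d_0` for `1 ≤ i ≤ r-1`,
`(-1)^r d_0 h_r + h_r d_0 = 0` and `d_1 h_1 + h_1 d_1 = g - f`.  For `r = 0`, a single
map `h` of bidegree `(0,-1)` with `d_0 h + h d_0 = g - f` and `h d_1 = d_1 h`. -/
def IsHtp {K L : Bicomplex R} (f g : BicomplexHom K L) (r : ℕ) (h : HFam K L) : Prop :=
  match r with
  | 0 =>
    (∀ n a b a' b', ¬(n = 0 ∧ a' = a ∧ b' = b - 1) → h n a b a' b' = 0) ∧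
    (∀ a b x, L.d0 a (b-1) a b (h 0 a b a (b-1) x) +
        h 0 a (b+1) a b (K.d0 a b a (b+1) x) = g.f a b x - f.f a b x) ∧
    (∀ a b x, L.d1 a (b-1) (a-1) (b-1) (h 0 a b a (b-1) x) =
        h 0 (a-1) b (a-1) (b-1) (K.d1 a b (a-1) b x))
  | r'+1 =>
    (∀ (n : ℕ) (a b a' b' : ℤ),
        ¬(1 ≤ n ∧ n ≤ r'+1 ∧ a' = a + (n:ℤ) ∧ b' = b + (n:ℤ) - 1) → h n a b a' b' = 0) ∧
    (∀ (i : ℕ), 1 ≤ i → i ≤ r' → ∀ (a b : ℤ) (x : K.X a b),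
        L.d1 (a+(i:ℤ)+1) (b+(i:ℤ)) (a+(i:ℤ)) (b+(i:ℤ)) (h (i+1) a b (a+(i:ℤ)+1) (b+(i:ℤ)) x) +
          (-1:R)^i • h (i+1) (a-1) b (a+(i:ℤ)) (b+(i:ℤ)) (K.d1 a b (a-1) b x) =
        L.d0 (a+(i:ℤ)) (b+(i:ℤ)-1) (a+(i:ℤ)) (b+(i:ℤ)) (h i a b (a+(i:ℤ)) (b+(i:ℤ)-1) x) +
          (-1:R)^i • h i a (b+1) (a+(i:ℤ)) (b+(i:ℤ)) (K.d0 a b a (b+1) x)) ∧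
    (∀ (a b : ℤ) (x : K.X a b),
        (-1:R)^(r'+1) • L.d0 (a+(r'+1:ℕ)) (b+(r'+1:ℕ)-1) (a+(r'+1:ℕ)) (b+(r'+1:ℕ))
            (h (r'+1) a b (a+(r'+1:ℕ)) (b+(r'+1:ℕ)-1) x) +
          h (r'+1) a (b+1) (a+(r'+1:ℕ)) (b+(r'+1:ℕ)) (K.d0 a b a (b+1) x) = 0) ∧
    (∀ (a b : ℤ) (x : K.X a b),
        L.d1 (a+1) b a b (h 1 a b (a+1) b x) + h 1 (a-1) b a b (K.d1 a b (a-1) b x) =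
          g.f a b x - f.f a b x)

theorem neg_one_pow_mul_neg_one_pow_add_self {M : Type*} [Monoid M] [HasDistribNeg M] (a b : ℕ) :
    (-1 : M) ^ a * (-1) ^ (b + a) = (-1) ^ b := by
  rw [add_comm, pow_add, ← mul_assoc, ← pow_add, Even.neg_one_pow ⟨a, rfl⟩, one_mul]

def ZWTuple.extendByZero {A : Bicomplex R} {m : ℕ} {P Q : ℤ} (t : ZWTuple A m P Q) (l : ℕ) :
    A.X (P - l) (Q - l) :=
  if hl : l < m then t ⟨l, hl⟩ else 0

theorem ZWTuple.extendByZero_of_lt {A : Bicomplex R} {m : ℕ} {P Q : ℤ} (t : ZWTuple A m P Q)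
    {l : ℕ} (hl : l < m) : t.extendByZero l = t ⟨l, hl⟩ :=
  dif_pos hl

theorem WChain.extendByZero {A : Bicomplex R} {m : ℕ} {P Q : ℤ} {t : ZWTuple A m P Q}
    (ht : WChain A m P Q t) {l : ℕ} (hl : l + 1 < m) :
    A.d1 (P - l) (Q - l) (P - (l + 1 : ℕ)) (Q - l) (t.extendByZero l) =
      A.d0 (P - (l + 1 : ℕ)) (Q - (l + 1 : ℕ)) (P - (l + 1 : ℕ)) (Q - l)
        (t.extendByZero (l + 1)) := by
  rw [t.extendByZero_of_lt (by omega), t.extendByZero_of_lt hl]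
  exact ht l hl

theorem IsWit.d1_eq_d0_extendByZero {A : Bicomplex R} {m : ℕ} {p q : ℤ} {x : A.X p q}
    {t : ZWTuple A m (p - 1) (q - 1)} (hx : IsWit A m p q x t) (hm : 0 < m) :
    A.d1 p q (p - 1 - (0 : ℕ)) (q - 1 - (0 : ℕ) + 1) x =
      A.d0 (p - 1 - (0 : ℕ)) (q - 1 - (0 : ℕ)) (p - 1 - (0 : ℕ)) (q - 1 - (0 : ℕ) + 1)
        (t.extendByZero 0) := by
  rw [t.extendByZero_of_lt hm]
  exact hx.2.2 hm

section Homotopy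

variable {A B : Bicomplex R}

def HFam.altSum (h : HFam A B) {m : ℕ} {P Q : ℤ} (t : ZWTuple A m P Q) (n k : ℕ) (a b : ℤ) :
    B.X a b :=
  ∑ l ∈ Finset.range k, (-1 : R) ^ l • h (n + l) (P - l) (Q - l) a b (t.extendByZero l)

def HFam.zigzag (h : HFam A B) {m : ℕ} {p q : ℤ} (x : A.X p q) (t : ZWTuple A m (p - 1) (q - 1))
    (n k : ℕ) (a b : ℤ) : B.X a b :=
  h n p q a b x - h.altSum t (n + 1) k a b

-- The last entry enters `IsB` through `d₀ b_{r+1} + d₁ b_r`, hence its opposite sign.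
def htpBoundary (h : HFam A B) {m : ℕ} {p q : ℤ} (x : A.X p q)
    (t : ZWTuple A m (p - 1) (q - 1)) (r : ℕ) : ZWTuple B (r + 2) (p + r + 1) (q + r) :=
  fun k => (if (k : ℕ) = r + 1 then 1 else -1 : R) •
    h.zigzag x t (r + 1 - k) k (p + r + 1 - (k : ℕ)) (q + r - (k : ℕ))

theorem HFam.apply_d1_eq_apply_d0 (h : HFam A B) (n : ℕ) {a b a' b' c₀ d₀ c d c' d' e e' : ℤ}
    {y : A.X a b} {z : A.X a' b'} (hyz : A.d1 a b c₀ d₀ y = A.d0 a' b' c₀ d₀ z)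
    (hc : c = c₀) (hd : d = d₀) (hc' : c' = c₀) (hd' : d' = d₀) :
    h n c d e e' (A.d1 a b c d y) = h n c' d' e e' (A.d0 a' b' c' d' z) := by
  subst hc hd hc' hd'
  rw [hyz]

variable {f g : BicomplexHom A B} {r : ℕ} {h : HFam A B}

theorem IsHtp.h_zero_apply (hh : IsHtp f g (r + 1) h) (a b a' b' : ℤ) (y : A.X a b) :
    h 0 a b a' b' y = 0 := by
  rw [hh.1 0 a b a' b' (by omega), LinearMap.zero_apply]

theorem IsHtp.d1_h_succ_add (hh : IsHtp f g (r + 1) h) {i : ℕ} (hi : 1 ≤ i) (hir : i ≤ r)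
    {a b a₁ b₁ a₀ b₀ c d : ℤ} (y : A.X a b) (ha₁ : a₁ = a + i + 1) (hb₁ : b₁ = b + i)
    (ha₀ : a₀ = a + i) (hb₀ : b₀ = b + i - 1) (hc : c = a + i) (hd : d = b + i) :
    B.d1 a₁ b₁ c d (h (i + 1) a b a₁ b₁ y) +
        (-1 : R) ^ i • h (i + 1) (a - 1) b c d (A.d1 a b (a - 1) b y) =
      B.d0 a₀ b₀ c d (h i a b a₀ b₀ y) +
        (-1 : R) ^ i • h i a (b + 1) c d (A.d0 a b a (b + 1) y) := by
  subst ha₁ hb₁ ha₀ hb₀ hc hd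
  exact hh.2.1 i hi hir a b y

theorem IsHtp.d0_h_last_add (hh : IsHtp f g (r + 1) h) {a b a₀ b₀ c d : ℤ} (y : A.X a b)
    (ha₀ : a₀ = a + (r + 1 : ℕ)) (hb₀ : b₀ = b + (r + 1 : ℕ) - 1) (hc : c = a + (r + 1 : ℕ))
    (hd : d = b + (r + 1 : ℕ)) :
    (-1 : R) ^ (r + 1) • B.d0 a₀ b₀ c d (h (r + 1) a b a₀ b₀ y) +
      h (r + 1) a (b + 1) c d (A.d0 a b a (b + 1) y) = 0 := by
  subst ha₀ hb₀ hc hd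
  exact hh.2.2.1 a b y

theorem IsHtp.d1_h_one_add (hh : IsHtp f g (r + 1) h) {a b a₁ b₁ : ℤ} (y : A.X a b)
    (ha₁ : a₁ = a + 1) (hb₁ : b₁ = b) :
    B.d1 a₁ b₁ a b (h 1 a b a₁ b₁ y) + h 1 (a - 1) b a b (A.d1 a b (a - 1) b y) =
      g.f a b y - f.f a b y := by
  subst ha₁ hb₁
  exact hh.2.2.2 _ _ y

theorem IsHtp.d0_h_last_eq_zero (hh : IsHtp f g (r + 1) h) {p q : ℤ} {x : A.X p q}
    (hx : A.d0 p q p (q + 1) x = 0) {a₀ b₀ c d : ℤ} (ha₀ : a₀ = p + (r + 1 : ℕ))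
    (hb₀ : b₀ = q + (r + 1 : ℕ) - 1) (hc : c = p + (r + 1 : ℕ)) (hd : d = q + (r + 1 : ℕ)) :
    B.d0 a₀ b₀ c d (h (r + 1) p q a₀ b₀ x) = 0 := by
  have htop := hh.d0_h_last_add x ha₀ hb₀ hc hd
  rwa [hx, map_zero, add_zero, ((isUnit_neg_one (α := R)).pow _).smul_eq_zero] at htop

theorem IsHtp.d1_h_extendByZero (hh : IsHtp f g (r + 1) h) {m : ℕ} {P Q : ℤ}
    {t : ZWTuple A m P Q} (ht : WChain A m P Q t) {n l : ℕ} (hn : 1 ≤ n) (hnl : n + l ≤ r)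
    (hlm : l + 1 < m) :
    (-1 : R) ^ l • B.d1 (P + n + 1) (Q + n) (P + n) (Q + n)
          (h (n + l + 1) (P - l) (Q - l) (P + n + 1) (Q + n) (t.extendByZero l)) +
        (-1 : R) ^ n • h (n + l + 1) (P - (l + 1 : ℕ)) (Q - (l + 1 : ℕ) + 1) (P + n) (Q + n)
          (A.d0 (P - (l + 1 : ℕ)) (Q - (l + 1 : ℕ)) (P - (l + 1 : ℕ)) (Q - (l + 1 : ℕ) + 1)
            (t.extendByZero (l + 1))) =
      (-1 : R) ^ l • B.d0 (P + n) (Q + n - 1) (P + n) (Q + n)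
          (h (n + l) (P - l) (Q - l) (P + n) (Q + n - 1) (t.extendByZero l)) +
        (-1 : R) ^ n • h (n + l) (P - l) (Q - l + 1) (P + n) (Q + n)
          (A.d0 (P - l) (Q - l) (P - l) (Q - l + 1) (t.extendByZero l)) := by
  have hrel := hh.d1_h_succ_add (i := n + l) (a₁ := P + n + 1) (b₁ := Q + n) (a₀ := P + n)
    (b₀ := Q + n - 1) (c := P + n) (d := Q + n) (by omega) hnl (t.extendByZero l)
    (by omega) (by omega) (by omega) (by omega) (by omega) (by omega)
  rw [h.apply_d1_eq_apply_d0 _ (ht.extendByZero hlm) (by omega) (by omega)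
    (c' := P - (l + 1 : ℕ)) (d' := Q - (l + 1 : ℕ) + 1) (by omega) (by omega)] at hrel
  have := congrArg ((-1 : R) ^ l • ·) hrel
  simpa only [smul_add, smul_smul, neg_one_pow_mul_neg_one_pow_add_self] using this

theorem IsHtp.d1_altSum (hh : IsHtp f g (r + 1) h) {m : ℕ} {P Q : ℤ} {t : ZWTuple A m P Q}
    (ht : WChain A m P Q t) {n k : ℕ} (hn : 1 ≤ n) (hnk : n + k = r + 1) (hkm : k < m)
    {a₁ b₁ a₀ b₀ c d : ℤ} (ha₁ : a₁ = P + n + 1) (hb₁ : b₁ = Q + n) (ha₀ : a₀ = P + n)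
    (hb₀ : b₀ = Q + n - 1) (hc : c = P + n) (hd : d = Q + n) :
    B.d1 a₁ b₁ c d (h.altSum t (n + 1) k a₁ b₁) =
      B.d0 a₀ b₀ c d (h.altSum t n (k + 1) a₀ b₀) +
        (-1 : R) ^ n • h n (P - (0 : ℕ)) (Q - (0 : ℕ) + 1) c d
          (A.d0 (P - (0 : ℕ)) (Q - (0 : ℕ)) (P - (0 : ℕ)) (Q - (0 : ℕ) + 1)
            (t.extendByZero 0)) := by
  subst ha₁ hb₁ ha₀ hb₀ hc hd
  let F : ℕ → B.X (P + n) (Q + n) := fun l =>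
    h (n + l) (P - l) (Q - l + 1) (P + n) (Q + n)
      (A.d0 (P - l) (Q - l) (P - l) (Q - l + 1) (t.extendByZero l))
  have step : ∀ l ∈ Finset.range k,
      (-1 : R) ^ l • B.d1 (P + n + 1) (Q + n) (P + n) (Q + n)
          (h (n + 1 + l) (P - l) (Q - l) (P + n + 1) (Q + n) (t.extendByZero l)) =
        (-1 : R) ^ l • B.d0 (P + n) (Q + n - 1) (P + n) (Q + n)
            (h (n + l) (P - l) (Q - l) (P + n) (Q + n - 1) (t.extendByZero l)) +
          ((-1 : R) ^ n • F l - (-1 : R) ^ n • F (l + 1)) := by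
    intro l hl
    rw [Finset.mem_range] at hl
    rw [Nat.add_right_comm, add_sub, eq_sub_iff_add_eq]
    exact hh.d1_h_extendByZero ht hn (by omega) (by omega)
  have htop := hh.d0_h_last_add (a₀ := P + n) (b₀ := Q + n - 1) (c := P + n) (d := Q + n)
    (t.extendByZero k) (by omega) (by omega) (by omega) (by omega)
  rw [← hnk, show ((-1 : R)) ^ (n + k) = (-1) ^ (k + n) by rw [add_comm]] at htop
  have hFk : F k = -((-1 : R) ^ (k + n) • B.d0 (P + n) (Q + n - 1) (P + n) (Q + n)
      (h (n + k) (P - k) (Q - k) (P + n) (Q + n - 1) (t.extendByZero k))) :=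
    eq_neg_of_add_eq_zero_right htop
  simp only [HFam.altSum, map_sum, map_smul]
  rw [Finset.sum_congr rfl step, Finset.sum_add_distrib,
    Finset.sum_range_sub' (fun l => (-1 : R) ^ n • F l), Finset.sum_range_succ, hFk, smul_neg,
    smul_smul, neg_one_pow_mul_neg_one_pow_add_self]
  simp only [F, Nat.add_zero]
  abel

theorem IsHtp.d1_zigzag (hh : IsHtp f g (r + 1) h) {m : ℕ} {p q : ℤ} {x : A.X p q}
    {t : ZWTuple A m (p - 1) (q - 1)} (hx : IsWit A m p q x t) {i k : ℕ} (hi : 1 ≤ i)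
    (hik : i + k = r) (hkm : k < m) {a₁ b₁ a₀ b₀ c d : ℤ} (ha₁ : a₁ = p + i + 1)
    (hb₁ : b₁ = q + i) (ha₀ : a₀ = p + i) (hb₀ : b₀ = q + i - 1) (hc : c = p + i)
    (hd : d = q + i) :
    B.d1 a₁ b₁ c d (h.zigzag x t (i + 1) k a₁ b₁) =
      B.d0 a₀ b₀ c d (h.zigzag x t i (k + 1) a₀ b₀) := by
  have hsum := hh.d1_altSum hx.2.1 (n := i + 1) (by omega) (by omega) hkm
    (a₁ := a₁) (b₁ := b₁) (a₀ := a₀) (b₀ := b₀) (c := c) (d := d)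
    (by omega) (by omega) (by omega) (by omega) (by omega) (by omega)
  have hrel := hh.d1_h_succ_add hi (by omega) x ha₁ hb₁ ha₀ hb₀ hc hd
  rw [hx.1, map_zero, smul_zero, add_zero,
    h.apply_d1_eq_apply_d0 _ (hx.d1_eq_d0_extendByZero (by omega)) (by omega) (by omega)
      rfl rfl] at hrel
  simp only [HFam.zigzag, map_sub]
  linear_combination (norm := module) hrel - hsum

theorem IsHtp.sub_eq_d0_zigzag_sub_d1_zigzag (hh : IsHtp f g (r + 1) h) {m : ℕ} {p q : ℤ}
    {x : A.X p q} {t : ZWTuple A m (p - 1) (q - 1)} (hx : IsWit A m p q x t) (hrm : r < m)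
    {a₁ b₁ a₀ b₀ : ℤ} (ha₁ : a₁ = p + 1) (hb₁ : b₁ = q) (ha₀ : a₀ = p) (hb₀ : b₀ = q - 1) :
    f.f p q x - g.f p q x =
      B.d0 a₀ b₀ p q (h.zigzag x t 0 (r + 1) a₀ b₀) -
        B.d1 a₁ b₁ p q (h.zigzag x t 1 r a₁ b₁) := by
  have hsum := hh.d1_altSum hx.2.1 (n := 1) le_rfl (by omega) hrm
    (a₁ := a₁) (b₁ := b₁) (a₀ := a₀) (b₀ := b₀) (c := p) (d := q)
    (by omega) (by omega) (by omega) (by omega) (by omega) (by omega)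
  have hrel := hh.d1_h_one_add x ha₁ hb₁
  rw [h.apply_d1_eq_apply_d0 _ (hx.d1_eq_d0_extendByZero (by omega)) (by omega) (by omega)
      rfl rfl] at hrel
  simp only [HFam.zigzag, map_sub, zero_add, hh.h_zero_apply, map_zero]
  linear_combination (norm := module) hrel - hsum

end Homotopy

/-- If `f, g : A → B` are `r`-homotopic (`r ≥ 1`, in the unpacked form: bigraded maps
`h_i` of bidegree `(i,i-1)`, `1 ≤ i ≤ r`, satisfying the listed identities), then
`E_{r+1}(f) = E_{r+1}(g)`: for every `(r+1)`-cycle `x`, `f(x) - g(x)` is an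
`(r+1)`-boundary. -/
theorem stmt15 {R : Type} [CommRing R] {A B : Bicomplex R} (f g : BicomplexHom A B)
    (r : ℕ) (hr : 1 ≤ r) (h : HFam A B) (hh : IsHtp f g r h) :
    ∀ p q x, IsZ A (r+1) p q x → IsB B (r+1) p q (f.f p q x - g.f p q x) := by
  obtain ⟨r, rfl⟩ : ∃ r', r = r' + 1 := ⟨r - 1, by omega⟩
  rintro p q x ⟨t, hx⟩
  refine ⟨htpBoundary h x t r, ?_, fun k hk => ?_, ?_⟩
  · simp only [htpBoundary, Nat.sub_zero, HFam.zigzag, HFam.altSum, Finset.sum_range_zero,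
      sub_zero, if_neg (Nat.succ_ne_zero r).symm, map_smul]
    rw [hh.d0_h_last_eq_zero hx.1 (by omega) (by omega) (by omega) (by omega), smul_zero]
  · simp only [htpBoundary, if_neg (show k ≠ r + 1 by omega),
      if_neg (show k + 1 ≠ r + 1 by omega), neg_one_smul, map_neg, neg_inj,
      show r + 1 - k = r - k + 1 by omega, show r + 1 - (k + 1) = r - k by omega]
    exact hh.d1_zigzag hx (by omega) (by omega) (by omega) (by omega) (by omega) (by omega)
      (by omega) (by omega) (by omega)
  · simp only [htpBoundary, if_pos, if_neg (show r ≠ r + 1 by omega), one_smul,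
      neg_one_smul, map_neg, Nat.sub_self, show r + 1 - r = 1 by omega]
    rw [← sub_eq_add_neg]
    exact hh.sub_eq_d0_zigzag_sub_d1_zigzag hx (by omega) (by omega) (by omega) (by omega)
      (by omega)
end
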